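/- Discrete inf-sup stability from projection stability: Let X and Y be finite-dimensional subspaces of a Hilbert space H₀ with duality pairing ⟨·,·⟩ extending the H₀ inner product, embedded in a Gelfand triple H ⊂ H₀ ⊂ H'. Suppose Q : H₀ → Y is the projection defined by ⟨Qv, τ⟩ = ⟨v, τ⟩ for all τ ∈ X, and Q is stable on H: ‖Qv‖_H ≤ c_S ‖v‖_H for all v ∈ H. Then the inf-sup condition holds: for all τ ∈ X, sup_{0≠v∈Y} ⟨τ, v⟩/‖v‖_H ≥ (1/c_S) ‖τ‖_{H'}. -/

import Mathlib

/-!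
Testing the pairing `⟨τ, ·⟩` with `τ ∈ X` cannot tell `v` from `Q v`, so for every `v ∈ H` with
`⟨τ, v⟩ > 0` the element `Q v ∈ Y` is nonzero and, by stability, `⟨τ, v⟩ / ‖v‖_H` is at most
`c_S` times the discrete quotient `⟨τ, Q v⟩ / ‖Q v‖_H`. Nonpositive quotients are harmless
because the discrete supremum is nonnegative: `Y` is symmetric under `v ↦ -v`.
-/

section QuotientSet

variable {E : Type*} [NormedAddCommGroup E] [InnerProductSpace ℝ E]

def quotientSet (τ : E) (n : E → ℝ) (V : Submodule ℝ E) : Set ℝ :=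
  {r | ∃ v ∈ V, v ≠ 0 ∧ r = inner ℝ τ v / n v}

lemma sSup_quotientSet_nonneg {τ : E} {n : E → ℝ} {V : Submodule ℝ E}
    (hn : ∀ v ∈ V, v ≠ 0 → 0 < n v) : 0 ≤ sSup (quotientSet τ n V) := by
  rcases (quotientSet τ n V).eq_empty_or_nonempty with hempty | ⟨_, v, hv, hv0, -⟩
  · rw [hempty, Real.sSup_empty]
  rcases le_total 0 (inner ℝ τ v) with hpos | hneg
  · exact Real.sSup_nonneg' ⟨_, ⟨v, hv, hv0, rfl⟩, div_nonneg hpos (hn v hv hv0).le⟩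
  · refine Real.sSup_nonneg' ⟨_, ⟨-v, V.neg_mem hv, neg_ne_zero.2 hv0, rfl⟩, ?_⟩
    rw [inner_neg_right]
    exact div_nonneg (neg_nonneg.2 hneg) (hn (-v) (V.neg_mem hv) (neg_ne_zero.2 hv0)).le

end QuotientSet

lemma Real.sSup_le_mul_sSup {A B : Set ℝ} {c : ℝ} (hB : BddAbove B) (hB0 : 0 ≤ sSup B)
    (hc : 0 ≤ c) (h : ∀ a ∈ A, 0 < a → ∃ b ∈ B, a ≤ c * b) : sSup A ≤ c * sSup B := by
  refine Real.sSup_le (fun a ha => ?_) (mul_nonneg hc hB0)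
  rcases le_or_gt a 0 with ha0 | ha0
  · exact ha0.trans (mul_nonneg hc hB0)
  obtain ⟨b, hb, hab⟩ := h a ha ha0
  exact hab.trans (mul_le_mul_of_nonneg_left (le_csSup hB hb) hc)

lemma div_le_mul_div_of_le_mul {a b b' c : ℝ} (ha : 0 ≤ a) (hb : 0 < b) (hb' : 0 < b')
    (h : b' ≤ c * b) : a / b ≤ c * (a / b') := by
  rw [mul_div_assoc', div_le_div_iff₀ hb hb']
  nlinarith

/-- `E` is the pivot space `H₀`, whose inner product realizes the duality pairing, and `Hs` is `H`
with norm `nH`; the supremum over `Hs` is `‖τ‖_{H'}`. -/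
theorem discrete_inf_sup_from_projection_stability_general
    {E : Type*} [NormedAddCommGroup E] [InnerProductSpace ℝ E]
    (Hs : Submodule ℝ E) (nH : E → ℝ)
    (hnH : ∀ v ∈ Hs, v ≠ 0 → 0 < nH v)
    (X Y : Submodule ℝ E) (hYH : Y ≤ Hs)
    (Q : E → E) (hQY : ∀ v, Q v ∈ Y)
    (hQdef : ∀ v : E, ∀ τ ∈ X, inner ℝ (Q v) τ = (inner ℝ v τ : ℝ))
    (cS : ℝ) (hcS : 0 < cS)
    (hQstab : ∀ v ∈ Hs, nH (Q v) ≤ cS * nH v) :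
    ∀ τ ∈ X,
      BddAbove {r : ℝ | ∃ v ∈ Y, v ≠ 0 ∧ r = (inner ℝ τ v : ℝ) / nH v} →
      BddAbove {r : ℝ | ∃ v ∈ Hs, v ≠ 0 ∧ r = (inner ℝ τ v : ℝ) / nH v} →
      (1 / cS) * sSup {r : ℝ | ∃ v ∈ Hs, v ≠ 0 ∧ r = (inner ℝ τ v : ℝ) / nH v} ≤
        sSup {r : ℝ | ∃ v ∈ Y, v ≠ 0 ∧ r = (inner ℝ τ v : ℝ) / nH v} := by
  intro τ hτ hbY _
  have hnY : ∀ v ∈ Y, v ≠ 0 → 0 < nH v := fun v hv => hnH v (hYH hv)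
  rw [one_div, inv_mul_le_iff₀ hcS]
  refine Real.sSup_le_mul_sSup hbY (sSup_quotientSet_nonneg hnY) hcS.le ?_
  rintro _ ⟨v, hv, hv0, rfl⟩ hpos
  have hnv := hnH v hv hv0
  have hτv : 0 < inner ℝ τ v := (div_pos_iff_of_pos_right hnv).1 hpos
  have hQτ : inner ℝ τ (Q v) = inner ℝ τ v := by
    rw [real_inner_comm, hQdef v τ hτ, real_inner_comm]
  have hQv0 : Q v ≠ 0 := by
    rintro hQ
    rw [hQ, inner_zero_right] at hQτ
    exact hτv.ne hQτ
  refine ⟨_, ⟨Q v, hQY v, hQv0, rfl⟩, ?_⟩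
  rw [hQτ]
  exact div_le_mul_div_of_le_mul hτv.le hnv (hnY _ (hQY v) hQv0) (hQstab v hv)

/-- Discrete inf-sup stability from projection stability in a Gelfand triple
`H ⊂ H₀ ⊂ H'`.  Here `E` models the pivot space `H₀`, whose inner product
realizes the duality pairing, `Hs` is the subspace `H` with norm `nH`,
`X, Y` are finite-dimensional subspaces, and `Q` is the Petrov–Galerkin
projection onto `Y` tested against `X`. -/
theorem discrete_inf_sup_from_projection_stability
    {E : Type*} [NormedAddCommGroup E] [InnerProductSpace ℝ E]
    (Hs : Submodule ℝ E) (nH : E → ℝ)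
    (hnH : ∀ v ∈ Hs, v ≠ 0 → 0 < nH v)
    (X Y : Submodule ℝ E) (hXH : X ≤ Hs) (hYH : Y ≤ Hs)
    [FiniteDimensional ℝ X] [FiniteDimensional ℝ Y]
    (Q : E → E) (hQY : ∀ v, Q v ∈ Y)
    (hQdef : ∀ v : E, ∀ τ ∈ X, inner ℝ (Q v) τ = (inner ℝ v τ : ℝ))
    (cS : ℝ) (hcS : 0 < cS)
    (hQstab : ∀ v ∈ Hs, nH (Q v) ≤ cS * nH v) :
    ∀ τ ∈ X,
      BddAbove {r : ℝ | ∃ v ∈ Y, v ≠ 0 ∧ r = (inner ℝ τ v : ℝ) / nH v} →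
      BddAbove {r : ℝ | ∃ v ∈ Hs, v ≠ 0 ∧ r = (inner ℝ τ v : ℝ) / nH v} →
      (1 / cS) * sSup {r : ℝ | ∃ v ∈ Hs, v ≠ 0 ∧ r = (inner ℝ τ v : ℝ) / nH v} ≤
        sSup {r : ℝ | ∃ v ∈ Y, v ≠ 0 ∧ r = (inner ℝ τ v : ℝ) / nH v} :=
  discrete_inf_sup_from_projection_stability_general Hs nH hnH X Y hYH Q hQY hQdef cS hcS hQstab
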